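/- Let (A,(p_l)) be a non-unital self-induced Fréchet algebra and let n ∈ ℕ. Then the unitization A# is (2n+1)-weakly amenable if and only if every continuous derivation D : A → A^(2n+1) for which there exists T ∈ A* with ⟨ab,T⟩ = ⟨a,D(b)⟩ + ⟨b,D(a)⟩ for all a,b ∈ A is inner; moreover, in this case necessarily T = 0 for every such derivation. -/

import Mathlib

/-!
Every iterated dual of `A#` splits as `A^(k) ⊕ ℂ`, the splitting at level `k + 1` being the dual
of the one at level `k`. In these coordinates `a ∈ A` acts on even levels by
`a · (f, λ) = (a · f + λ a, 0)` and on odd levels by `a · (f, λ) = (a · f, ⟨f, a⟩)` (likewise on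
the right), and duality exchanges the two shapes. Hence a derivation `A# → A#^(2n+1)`, which
kills `1`, amounts to a pair `(D, T)`: its `A^(2n+1)`-component `D` is a derivation and its
`ℂ`-component `T` satisfies `⟨ab, T⟩ = ⟨a, D b⟩ + ⟨b, D a⟩`; it is inner exactly when `D` is inner
and `T = 0`. Finally, if `D` is inner then `T` vanishes on products, hence on `A` by essentiality.
-/

noncomputable section

open Filter Topology

/-- A topological `ℂ`-module `X` equipped with left and right actions of `A`,
each acting by continuous linear maps on `X`.  This is the data underlying a
locally convex `A`-bimodule. -/
structure BiMod (A : Type) : Type 1 where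
  X : Type
  [ag : AddCommGroup X]
  [md : Module ℂ X]
  [ts : TopologicalSpace X]
  l : A → X →L[ℂ] X
  r : A → X →L[ℂ] X

attribute [instance] BiMod.ag BiMod.md BiMod.ts

namespace BiMod

variable {A : Type}

/-- The strong dual of a bimodule, with the canonical dual actions
`⟨a·f, x⟩ = ⟨f, x·a⟩` and `⟨f·a, x⟩ = ⟨f, a·x⟩`.  The dual carries the strong
topology (uniform convergence on von Neumann bounded sets), which is the default
topology on `X →L[ℂ] ℂ` in Mathlib. -/
def dual (M : BiMod A) : BiMod A where
  X := M.X →L[ℂ] ℂ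
  l a := ContinuousLinearMap.precomp ℂ (M.r a)
  r a := ContinuousLinearMap.precomp ℂ (M.l a)

/-- The `n`-th iterated strong dual of a bimodule (`iterDual M 0 = M`). -/
def iterDual (M : BiMod A) : ℕ → BiMod A
  | 0 => M
  | n + 1 => (M.iterDual n).dual

instance dualCSM (M : BiMod A) : ContinuousSMul ℂ (M.dual).X :=
  inferInstanceAs (ContinuousSMul ℂ (M.X →L[ℂ] ℂ))

/-- Evaluation (canonical) embedding of a bimodule into its double dual. -/
def evalEmbed (M : BiMod A) [ContinuousSMul ℂ M.X] (x : M.X) : M.dual.dual.X :=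
  show (M.X →L[ℂ] ℂ) →L[ℂ] ℂ from
    ⟨⟨⟨fun f => f x, fun _ _ => rfl⟩, fun _ _ => rfl⟩, continuous_eval_const x⟩

/-- `ContinuousSMul` holds at every level of the iterated dual. -/
def iterCSM (M : BiMod A) (h : ContinuousSMul ℂ M.X) :
    ∀ n, ContinuousSMul ℂ (M.iterDual n).X
  | 0 => h
  | n + 1 => inferInstanceAs (ContinuousSMul ℂ ((M.iterDual n).X →L[ℂ] ℂ))

/-- The canonical (iterated evaluation) embedding `M → M^(2n)`. -/
def iterEmbed (M : BiMod A) (h : ContinuousSMul ℂ M.X) :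
    ∀ n : ℕ, M.X → (M.iterDual (2 * n)).X
  | 0, x => x
  | n + 1, x =>
    haveI := M.iterCSM h (2 * n)
    (M.iterDual (2 * n)).evalEmbed (M.iterEmbed h n x)

/-- The pairing between the `(k+1)`-st dual and the `k`-th dual. -/
def pairApply (M : BiMod A) (k : ℕ) (F : (M.iterDual (k + 1)).X)
    (x : (M.iterDual k).X) : ℂ := (show (M.iterDual k).X →L[ℂ] ℂ from F) x

end BiMod

section Defs

variable (A : Type) [NonUnitalRing A] [Module ℂ A] [SMulCommClass ℂ A A] [IsScalarTower ℂ A A]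
  [TopologicalSpace A] [IsTopologicalAddGroup A] [ContinuousSMul ℂ A] [ContinuousMul A]

/-- A continuous derivation from `A` into a bimodule. -/
def IsContDerivation (M : BiMod A) (D : A →L[ℂ] M.X) : Prop :=
  ∀ a b : A, D (a * b) = M.l a (D b) + M.r b (D a)

/-- An inner derivation : `D a = a·x - x·a` for some `x`. -/
def IsInnerDerivation (M : BiMod A) (D : A →L[ℂ] M.X) : Prop :=
  ∃ x : M.X, ∀ a : A, D a = M.l a x - M.r a x

/-- `A` as a bimodule over itself, via left/right multiplication. -/
def selfBiMod : BiMod A where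
  X := A
  l a := ⟨LinearMap.mulLeft ℂ a, continuous_mul_left a⟩
  r a := ⟨LinearMap.mulRight ℂ a, continuous_mul_right a⟩

/-- `A` is `n`-weakly amenable if every continuous derivation from `A` into the
`n`-th iterated strong dual `A^(n)` (with the canonical module actions) is inner. -/
def NWeaklyAmenable (n : ℕ) : Prop :=
  ∀ D : A →L[ℂ] ((selfBiMod A).iterDual n).X,
    IsContDerivation A ((selfBiMod A).iterDual n) D →
      IsInnerDerivation A ((selfBiMod A).iterDual n) D

/-- A closed two-sided ideal `I` of `A` (a closed `ℂ`-subalgebra which absorbs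
multiplication on both sides) as an `A`-bimodule. -/
def idealBiMod (I : NonUnitalSubalgebra ℂ A)
    (hl : ∀ a : A, ∀ x ∈ I, a * x ∈ I) (hr : ∀ a : A, ∀ x ∈ I, x * a ∈ I) : BiMod A where
  X := ↥I
  l a := ⟨{ toFun := fun x => (⟨a * (x : A), hl a x x.2⟩ : ↥I)
            map_add' := fun x y => by ext; simp [mul_add]
            map_smul' := fun c x => by ext; simp [mul_smul_comm] },
          (Continuous.subtype_mk ((continuous_mul_left a).comp continuous_subtype_val) _)⟩
  r a := ⟨{ toFun := fun x => (⟨(x : A) * a, hr a x x.2⟩ : ↥I)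
            map_add' := fun x y => by ext; simp [add_mul]
            map_smul' := fun c x => by ext; simp [smul_mul_assoc] },
          (Continuous.subtype_mk ((continuous_mul_right a).comp continuous_subtype_val) _)⟩

/-- `A` is `n`-ideally amenable if for every closed two-sided ideal `I` of `A`,
every continuous derivation from `A` into `I^(n)` is inner. -/
def NIdeallyAmenable (n : ℕ) : Prop :=
  ∀ (I : NonUnitalSubalgebra ℂ A), IsClosed (I : Set A) →
    ∀ (hl : ∀ a : A, ∀ x ∈ I, a * x ∈ I) (hr : ∀ a : A, ∀ x ∈ I, x * a ∈ I),
      ∀ D : A →L[ℂ] ((idealBiMod A I hl hr).iterDual n).X,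
        IsContDerivation A ((idealBiMod A I hl hr).iterDual n) D →
          IsInnerDerivation A ((idealBiMod A I hl hr).iterDual n) D

/-- The topology of `A` is generated by an increasing sequence of submultiplicative
seminorms.  Together with completeness and Hausdorffness this says that `A` is a
Fréchet algebra. -/
def FrechetSeminorms : Prop :=
  ∃ p : SeminormFamily ℂ A ℕ, WithSeminorms p ∧ (∀ n, p n ≤ p (n + 1)) ∧
    ∀ (n : ℕ) (x y : A), p n (x * y) ≤ p n x * p n y

/-- `A` has an identity element. -/
def HasIdentity : Prop := ∃ e : A, ∀ a : A, e * a = a ∧ a * e = a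

end Defs

section Montel

variable (E : Type) [AddCommGroup E] [Module ℂ E] [TopologicalSpace E]

/-- A Montel space: a barrelled locally convex Hausdorff space in which every closed
(von Neumann) bounded subset is compact. -/
def IsMontelSpace : Prop :=
  LocallyConvexSpace ℝ E ∧ T2Space E ∧ BarrelledSpace ℂ E ∧
    ∀ s : Set E, IsClosed s → Bornology.IsVonNBounded ℂ s → IsCompact s

end Montel

section More

variable (A : Type) [NonUnitalRing A] [Module ℂ A] [SMulCommClass ℂ A A] [IsScalarTower ℂ A A]
  [TopologicalSpace A] [IsTopologicalAddGroup A] [ContinuousSMul ℂ A] [ContinuousMul A]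

/-- A bounded approximate identity: a bounded net `(e_i)` with `e_i * a → a` and
`a * e_i → a` for every `a`. -/
def HasBoundedApproxIdentity : Prop :=
  ∃ (ι : Type) (_ : Preorder ι) (_ : IsDirected ι (· ≤ ·)) (_ : Nonempty ι) (e : ι → A),
    Bornology.IsVonNBounded ℂ (Set.range e) ∧
      ∀ a : A, Tendsto (fun i => e i * a) atTop (𝓝 a) ∧
        Tendsto (fun i => a * e i) atTop (𝓝 a)

/-- `A` is essential: the linear span of products is dense. -/
def IsEssential : Prop :=
  Dense ((Submodule.span ℂ {x : A | ∃ a b : A, x = a * b} : Submodule ℂ A) : Set A)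

/-- `A` is self-induced: it is essential and every balanced bilinear functional
`φ` (i.e. `φ (a*c) b = φ a (c*b)`) is of the form `φ a b = f (a*b)` for some
continuous linear functional `f`. -/
def SelfInduced : Prop :=
  IsEssential A ∧
    ∀ φ : A →ₗ[ℂ] A →ₗ[ℂ] ℂ, (∀ a b c : A, φ (a * c) b = φ a (c * b)) →
      ∃ f : A →L[ℂ] ℂ, ∀ a b : A, φ a b = f (a * b)

/-- The data of `M : BiMod A` constitutes a genuine locally convex `A`-bimodule:
the actions satisfy the bimodule laws, are `ℂ`-bilinear, jointly continuous, and
`M.X` is locally convex. -/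
structure IsLCBimod (M : BiMod A) : Prop where
  lc : LocallyConvexSpace ℝ M.X
  l_mul : ∀ (a b : A) (x : M.X), M.l (a * b) x = M.l a (M.l b x)
  r_mul : ∀ (a b : A) (x : M.X), M.r (a * b) x = M.r b (M.r a x)
  l_add : ∀ (a b : A) (x : M.X), M.l (a + b) x = M.l a x + M.l b x
  r_add : ∀ (a b : A) (x : M.X), M.r (a + b) x = M.r a x + M.r b x
  l_smul : ∀ (c : ℂ) (a : A) (x : M.X), M.l (c • a) x = c • M.l a x
  r_smul : ∀ (c : ℂ) (a : A) (x : M.X), M.r (c • a) x = c • M.r a x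
  lr_comm : ∀ (a b : A) (x : M.X), M.l a (M.r b x) = M.r b (M.l a x)
  cont_l : Continuous fun q : A × M.X => M.l q.1 q.2
  cont_r : Continuous fun q : A × M.X => M.r q.1 q.2

/-- `A` is amenable: for every locally convex `A`-bimodule `X`, every continuous
derivation from `A` into the strong dual `X*` (with the canonical dual actions)
is inner. -/
def Amenable : Prop :=
  ∀ M : BiMod A, IsLCBimod A M →
    ∀ D : A →L[ℂ] M.dual.X, IsContDerivation A M.dual D → IsInnerDerivation A M.dual D

end More

section UnitizationInstances

variable (A : Type) [NonUnitalRing A] [Module ℂ A] [SMulCommClass ℂ A A] [IsScalarTower ℂ A A]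
  [TopologicalSpace A] [IsTopologicalAddGroup A] [ContinuousSMul ℂ A] [ContinuousMul A]

/-- The unitization `A# = ℂ ⊕ A` carries the product topology, which is the topology
generated by the seminorms `q_l (a, λ) = p_l a + |λ|`. -/
instance : TopologicalSpace (Unitization ℂ A) :=
  TopologicalSpace.induced Unitization.toProd (inferInstance : TopologicalSpace (ℂ × A))

instance : IsTopologicalAddGroup (Unitization ℂ A) where
  continuous_add := continuous_induced_rng.2 <| by
    show Continuous fun p : Unitization ℂ A × Unitization ℂ A => p.1.toProd + p.2.toProd
    exact (continuous_induced_dom.comp continuous_fst).add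
      (continuous_induced_dom.comp continuous_snd)
  continuous_neg := continuous_induced_rng.2 <| by
    show Continuous fun p : Unitization ℂ A => -p.toProd
    exact continuous_induced_dom.neg

instance : ContinuousSMul ℂ (Unitization ℂ A) where
  continuous_smul := continuous_induced_rng.2 <| by
    show Continuous fun p : ℂ × Unitization ℂ A => p.1 • p.2.toProd
    exact continuous_fst.smul (continuous_induced_dom.comp continuous_snd)

instance : ContinuousMul (Unitization ℂ A) where
  continuous_mul := continuous_induced_rng.2 <| by
    have h1 : Continuous fun p : Unitization ℂ A × Unitization ℂ A => p.1.toProd :=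
      continuous_induced_dom.comp continuous_fst
    have h2 : Continuous fun p : Unitization ℂ A × Unitization ℂ A => p.2.toProd :=
      continuous_induced_dom.comp continuous_snd
    show Continuous fun p : Unitization ℂ A × Unitization ℂ A =>
      ((p.1.toProd.1 * p.2.toProd.1, p.1.toProd.1 • p.2.toProd.2 + p.2.toProd.1 • p.1.toProd.2
        + p.1.toProd.2 * p.2.toProd.2) : ℂ × A)
    exact (h1.fst.mul h2.fst).prodMk
      (((h1.fst.smul h2.snd).add (h2.fst.smul h1.snd)).add (h1.snd.mul h2.snd))

end UnitizationInstances

/-- The compatibility condition `⟨ab, T⟩ = ⟨a, D b⟩ + ⟨b, D a⟩` between a derivation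
`D : A → A^(2n+1)` and a functional `T ∈ A*`, where `⟨·,·⟩` is the canonical pairing
of `A^(2n+1)` with `A^(2n)` and `A` is embedded canonically in `A^(2n)`. -/
def PairCondition (A : Type) [NonUnitalRing A] [Module ℂ A] [SMulCommClass ℂ A A]
    [IsScalarTower ℂ A A] [TopologicalSpace A] [IsTopologicalAddGroup A] [ContinuousSMul ℂ A]
    [ContinuousMul A] (n : ℕ)
    (D : A →L[ℂ] ((selfBiMod A).iterDual (2 * n + 1)).X) (T : A →L[ℂ] ℂ) : Prop :=
  ∀ a b : A, T (a * b) =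
      (selfBiMod A).pairApply (2 * n) (D b)
        ((selfBiMod A).iterEmbed (show ContinuousSMul ℂ (selfBiMod A).X from
          inferInstanceAs (ContinuousSMul ℂ A)) n a)
    + (selfBiMod A).pairApply (2 * n) (D a)
        ((selfBiMod A).iterEmbed (show ContinuousSMul ℂ (selfBiMod A).X from
          inferInstanceAs (ContinuousSMul ℂ A)) n b)

namespace BiMod

variable {R : Type}

structure IsUnitalLinear [Add R] [One R] [SMul ℂ R] (M : BiMod R) : Prop where
  l_add : ∀ (a b : R) (x : M.X), M.l (a + b) x = M.l a x + M.l b x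
  r_add : ∀ (a b : R) (x : M.X), M.r (a + b) x = M.r a x + M.r b x
  l_smul : ∀ (c : ℂ) (a : R) (x : M.X), M.l (c • a) x = c • M.l a x
  r_smul : ∀ (c : ℂ) (a : R) (x : M.X), M.r (c • a) x = c • M.r a x
  l_one : ∀ x : M.X, M.l 1 x = x
  r_one : ∀ x : M.X, M.r 1 x = x

theorem IsUnitalLinear.dual [Add R] [One R] [SMul ℂ R] {M : BiMod R} (h : M.IsUnitalLinear) :
    M.dual.IsUnitalLinear where
  l_add a b (F : M.X →L[ℂ] ℂ) := ContinuousLinearMap.ext fun x => by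
    show F (M.r (a + b) x) = F (M.r a x) + F (M.r b x)
    rw [h.r_add, map_add]
  r_add a b (F : M.X →L[ℂ] ℂ) := ContinuousLinearMap.ext fun x => by
    show F (M.l (a + b) x) = F (M.l a x) + F (M.l b x)
    rw [h.l_add, map_add]
  l_smul c a (F : M.X →L[ℂ] ℂ) := ContinuousLinearMap.ext fun x => by
    show F (M.r (c • a) x) = c • F (M.r a x)
    rw [h.r_smul, map_smul]
  r_smul c a (F : M.X →L[ℂ] ℂ) := ContinuousLinearMap.ext fun x => by
    show F (M.l (c • a) x) = c • F (M.l a x)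
    rw [h.l_smul, map_smul]
  l_one (F : M.X →L[ℂ] ℂ) := ContinuousLinearMap.ext fun x => congrArg F (h.r_one x)
  r_one (F : M.X →L[ℂ] ℂ) := ContinuousLinearMap.ext fun x => congrArg F (h.l_one x)

theorem IsUnitalLinear.iterDual [Add R] [One R] [SMul ℂ R] {M : BiMod R}
    (h : M.IsUnitalLinear) : ∀ k, (M.iterDual k).IsUnitalLinear
  | 0 => h
  | k + 1 => (h.iterDual k).dual

theorem iterEmbed_l (M : BiMod R) (h : ContinuousSMul ℂ M.X) (a : R) :
    ∀ (n : ℕ) (x : M.X),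
      (M.iterDual (2 * n)).l a (M.iterEmbed h n x) = M.iterEmbed h n (M.l a x)
  | 0, _ => rfl
  | n + 1, x =>
    haveI := M.iterCSM h (2 * n)
    (congrArg (M.iterDual (2 * n)).evalEmbed (M.iterEmbed_l h a n x) :)

theorem iterEmbed_r (M : BiMod R) (h : ContinuousSMul ℂ M.X) (a : R) :
    ∀ (n : ℕ) (x : M.X),
      (M.iterDual (2 * n)).r a (M.iterEmbed h n x) = M.iterEmbed h n (M.r a x)
  | 0, _ => rfl
  | n + 1, x =>
    haveI := M.iterCSM h (2 * n)
    (congrArg (M.iterDual (2 * n)).evalEmbed (M.iterEmbed_r h a n x) :)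

end BiMod

theorem isUnitalLinear_selfBiMod (R : Type) [Ring R] [Module ℂ R] [SMulCommClass ℂ R R]
    [IsScalarTower ℂ R R] [TopologicalSpace R] [IsTopologicalAddGroup R] [ContinuousSMul ℂ R]
    [ContinuousMul R] : (selfBiMod R).IsUnitalLinear where
  l_add a b (x : R) := add_mul a b x
  r_add a b (x : R) := mul_add x a b
  l_smul c a (x : R) := smul_mul_assoc c a x
  r_smul c a (x : R) := mul_smul_comm c x a
  l_one (x : R) := one_mul x
  r_one (x : R) := mul_one x

theorem IsContDerivation.map_one {R : Type} [Ring R] [Module ℂ R] [TopologicalSpace R]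
    {M : BiMod R} (hM : M.IsUnitalLinear) {D : R →L[ℂ] M.X} (hD : IsContDerivation R M D) :
    D 1 = 0 := by
  have h := hD 1 1
  rw [mul_one, hM.l_one, hM.r_one] at h
  exact left_eq_add.mp h

section Unitization

variable {A : Type} [AddCommGroup A] [Module ℂ A]

theorem Unitization.fst_smul_one_add_inr (u : Unitization ℂ A) :
    u.fst • 1 + (u.snd : Unitization ℂ A) = u := by
  ext <;> simp

theorem BiMod.IsUnitalLinear.l_unitization {M : BiMod (Unitization ℂ A)} (h : M.IsUnitalLinear)
    (u : Unitization ℂ A) (x : M.X) : M.l u x = u.fst • x + M.l u.snd x := by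
  conv_lhs => rw [← u.fst_smul_one_add_inr]
  rw [h.l_add, h.l_smul, h.l_one]

theorem BiMod.IsUnitalLinear.r_unitization {M : BiMod (Unitization ℂ A)} (h : M.IsUnitalLinear)
    (u : Unitization ℂ A) (x : M.X) : M.r u x = u.fst • x + M.r u.snd x := by
  conv_lhs => rw [← u.fst_smul_one_add_inr]
  rw [h.r_add, h.r_smul, h.r_one]

variable (A) [TopologicalSpace A]

def Unitization.inrCLM : A →L[ℂ] Unitization ℂ A :=
  ⟨Unitization.inrHom ℂ ℂ A, continuous_induced_rng.2 (continuous_const.prodMk continuous_id)⟩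

def Unitization.sndCLM : Unitization ℂ A →L[ℂ] A :=
  ⟨Unitization.sndHom ℂ ℂ A, continuous_snd.comp continuous_induced_dom⟩

def Unitization.fstCLM : Unitization ℂ A →L[ℂ] ℂ :=
  ⟨⟨⟨fun u => u.fst, fun _ _ => rfl⟩, fun _ _ => rfl⟩, continuous_fst.comp continuous_induced_dom⟩

end Unitization

/-- A topological direct sum decomposition `E = incl F ⊕ ℂ unit`. -/
structure LineSplitting (E F : Type) [AddCommGroup E] [Module ℂ E] [TopologicalSpace E]
    [AddCommGroup F] [Module ℂ F] [TopologicalSpace F] where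
  proj : E →L[ℂ] F
  incl : F →L[ℂ] E
  coeff : E →L[ℂ] ℂ
  unit : E
  proj_incl : ∀ f, proj (incl f) = f
  proj_unit : proj unit = 0
  coeff_incl : ∀ f, coeff (incl f) = 0
  coeff_unit : coeff unit = 1
  incl_proj_add_coeff_smul : ∀ x, incl (proj x) + coeff x • unit = x

namespace LineSplitting

variable {E F : Type} [AddCommGroup E] [Module ℂ E] [TopologicalSpace E]
  [AddCommGroup F] [Module ℂ F] [TopologicalSpace F]

theorem proj_incl_add_smul_unit (s : LineSplitting E F) (f : F) (c : ℂ) :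
    s.proj (s.incl f + c • s.unit) = f := by
  rw [map_add, map_smul, s.proj_incl, s.proj_unit, smul_zero, add_zero]

theorem coeff_incl_add_smul_unit (s : LineSplitting E F) (f : F) (c : ℂ) :
    s.coeff (s.incl f + c • s.unit) = c := by
  rw [map_add, map_smul, s.coeff_incl, s.coeff_unit, zero_add, smul_eq_mul, mul_one]

def dual [ContinuousSMul ℂ E] (s : LineSplitting E F) :
    LineSplitting (E →L[ℂ] ℂ) (F →L[ℂ] ℂ) where
  proj := ContinuousLinearMap.precomp ℂ s.incl
  incl := ContinuousLinearMap.precomp ℂ s.proj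
  coeff := ⟨⟨⟨fun φ => φ s.unit, fun _ _ => rfl⟩, fun _ _ => rfl⟩, continuous_eval_const s.unit⟩
  unit := s.coeff
  proj_incl φ := ContinuousLinearMap.ext fun f => congrArg φ (s.proj_incl f)
  proj_unit := ContinuousLinearMap.ext s.coeff_incl
  coeff_incl φ := show φ (s.proj s.unit) = 0 by rw [s.proj_unit, map_zero]
  coeff_unit := s.coeff_unit
  incl_proj_add_coeff_smul φ := ContinuousLinearMap.ext fun x => by
    simpa [mul_comm] using congrArg φ (s.incl_proj_add_coeff_smul x)

end LineSplitting

section Actions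

variable {A : Type} {M : BiMod (Unitization ℂ A)} {N : BiMod A}

def ActsViaEmbedding (s : LineSplitting M.X N.X) (j : A → N.X) : Prop :=
  ∀ (a : A) (x : M.X),
    M.l a x = s.incl (N.l a (s.proj x) + s.coeff x • j a) ∧
    M.r a x = s.incl (N.r a (s.proj x) + s.coeff x • j a)

def ActsViaPairing (s : LineSplitting M.X N.X) (t : A → N.X →L[ℂ] ℂ) : Prop :=
  ∀ (a : A) (x : M.X),
    M.l a x = s.incl (N.l a (s.proj x)) + t a (s.proj x) • s.unit ∧
    M.r a x = s.incl (N.r a (s.proj x)) + t a (s.proj x) • s.unit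

theorem ActsViaEmbedding.dual [ContinuousSMul ℂ M.X] [ContinuousSMul ℂ N.X]
    {s : LineSplitting M.X N.X} {j : A → N.X} (h : ActsViaEmbedding s j) :
    ActsViaPairing (M := M.dual) (N := N.dual) s.dual (fun a => N.evalEmbed (j a)) := by
  intro a (F : M.X →L[ℂ] ℂ)
  constructor <;> refine ContinuousLinearMap.ext fun x => ?_
  · show F (M.r a x) = F (s.incl (N.r a (s.proj x))) + F (s.incl (j a)) * s.coeff x
    rw [(h a x).2, map_add, map_add, map_smul, map_smul, smul_eq_mul, mul_comm]
  · show F (M.l a x) = F (s.incl (N.l a (s.proj x))) + F (s.incl (j a)) * s.coeff x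
    rw [(h a x).1, map_add, map_add, map_smul, map_smul, smul_eq_mul, mul_comm]

theorem ActsViaPairing.dual [ContinuousSMul ℂ M.X] {s : LineSplitting M.X N.X}
    {t : A → N.X →L[ℂ] ℂ} (h : ActsViaPairing s t) :
    ActsViaEmbedding (M := M.dual) (N := N.dual) s.dual t := by
  intro a (F : M.X →L[ℂ] ℂ)
  constructor <;> refine ContinuousLinearMap.ext fun x => ?_
  · show F (M.r a x) = F (s.incl (N.r a (s.proj x))) + F s.unit * t a (s.proj x)
    rw [(h a x).2, map_add, map_smul, smul_eq_mul, mul_comm]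
  · show F (M.l a x) = F (s.incl (N.l a (s.proj x))) + F s.unit * t a (s.proj x)
    rw [(h a x).1, map_add, map_smul, smul_eq_mul, mul_comm]

end Actions

section Derivations

variable {A : Type} [NonUnitalRing A] [Module ℂ A] [TopologicalSpace A]
  {M : BiMod (Unitization ℂ A)} {N : BiMod A} {s : LineSplitting M.X N.X}
  {t : A → N.X →L[ℂ] ℂ}

theorem eq_zero_of_isInnerDerivation (hA : IsEssential A)
    (ht : ∀ a b f, t a (N.l b f) = t (a * b) f ∧ t a (N.r b f) = t (b * a) f)
    {D : A →L[ℂ] N.X} {T : A →L[ℂ] ℂ} (hT : ∀ a b, T (a * b) = t a (D b) + t b (D a))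
    (hD : IsInnerDerivation A N D) : T = 0 := by
  obtain ⟨x, hx⟩ := hD
  refine ContinuousLinearMap.ext_on hA ?_
  rintro _ ⟨a, b, rfl⟩
  rw [hT, hx, hx, map_sub, map_sub, (ht a b x).1, (ht a b x).2, (ht b a x).1, (ht b a x).2,
    zero_apply]
  abel

variable (s) in
def liftDerivation [IsTopologicalAddGroup M.X] [ContinuousSMul ℂ M.X] (D : A →L[ℂ] N.X)
    (T : A →L[ℂ] ℂ) : Unitization ℂ A →L[ℂ] M.X :=
  (s.incl ∘L D + ContinuousLinearMap.toSpanSingleton ℂ s.unit ∘L T) ∘L Unitization.sndCLM A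

theorem liftDerivation_apply [IsTopologicalAddGroup M.X] [ContinuousSMul ℂ M.X]
    (D : A →L[ℂ] N.X) (T : A →L[ℂ] ℂ) (u : Unitization ℂ A) :
    liftDerivation s D T u = s.incl (D u.snd) + T u.snd • s.unit := rfl

variable [SMulCommClass ℂ A A] [IsScalarTower ℂ A A]

theorem isContDerivation_liftDerivation [IsTopologicalAddGroup M.X] [ContinuousSMul ℂ M.X]
    (hM : M.IsUnitalLinear) (hs : ActsViaPairing s t) {D : A →L[ℂ] N.X} {T : A →L[ℂ] ℂ}
    (hD : IsContDerivation A N D) (hT : ∀ a b, T (a * b) = t a (D b) + t b (D a)) :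
    IsContDerivation (Unitization ℂ A) M (liftDerivation s D T) := by
  intro u v
  rw [liftDerivation_apply, liftDerivation_apply, liftDerivation_apply, hM.l_unitization,
    hM.r_unitization, (hs u.snd _).1, (hs v.snd _).2, s.proj_incl_add_smul_unit,
    s.proj_incl_add_smul_unit, Unitization.snd_mul]
  simp only [map_add, map_smul, hD u.snd v.snd, hT u.snd v.snd]
  module

theorem IsInnerDerivation.of_liftDerivation [IsTopologicalAddGroup M.X] [ContinuousSMul ℂ M.X]
    (hs : ActsViaPairing s t) {D : A →L[ℂ] N.X} {T : A →L[ℂ] ℂ}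
    (h : IsInnerDerivation (Unitization ℂ A) M (liftDerivation s D T)) :
    IsInnerDerivation A N D := by
  obtain ⟨x, hx⟩ := h
  refine ⟨s.proj x, fun a => ?_⟩
  have h := congrArg s.proj (hx a)
  rwa [liftDerivation_apply, Unitization.snd_inr, s.proj_incl_add_smul_unit, map_sub,
    (hs a x).1, (hs a x).2, s.proj_incl_add_smul_unit, s.proj_incl_add_smul_unit] at h

theorem isContDerivation_proj_comp (hs : ActsViaPairing s t) {D : Unitization ℂ A →L[ℂ] M.X}
    (hD : IsContDerivation (Unitization ℂ A) M D) :
    IsContDerivation A N (s.proj ∘L D ∘L Unitization.inrCLM A) := by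
  intro a b
  show s.proj (D ((a * b : A) : Unitization ℂ A)) =
    N.l a (s.proj (D b)) + N.r b (s.proj (D a))
  rw [Unitization.inr_mul, hD, map_add, (hs a _).1, (hs b _).2, s.proj_incl_add_smul_unit,
    s.proj_incl_add_smul_unit]

theorem coeff_comp_apply_mul (hs : ActsViaPairing s t) {D : Unitization ℂ A →L[ℂ] M.X}
    (hD : IsContDerivation (Unitization ℂ A) M D) (a b : A) :
    (s.coeff ∘L D ∘L Unitization.inrCLM A) (a * b) =
      t a ((s.proj ∘L D ∘L Unitization.inrCLM A) b) +
        t b ((s.proj ∘L D ∘L Unitization.inrCLM A) a) := by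
  show s.coeff (D ((a * b : A) : Unitization ℂ A)) = t a (s.proj (D b)) + t b (s.proj (D a))
  rw [Unitization.inr_mul, hD, map_add, (hs a _).1, (hs b _).2, s.coeff_incl_add_smul_unit,
    s.coeff_incl_add_smul_unit]

theorem IsInnerDerivation.of_proj_comp (hM : M.IsUnitalLinear) (hs : ActsViaPairing s t)
    {D : Unitization ℂ A →L[ℂ] M.X} (hD : IsContDerivation (Unitization ℂ A) M D)
    (hinner : IsInnerDerivation A N (s.proj ∘L D ∘L Unitization.inrCLM A))
    (hcoeff : s.coeff ∘L D ∘L Unitization.inrCLM A = 0) :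
    IsInnerDerivation (Unitization ℂ A) M D := by
  obtain ⟨x, hx⟩ := hinner
  refine ⟨s.incl x, fun u => ?_⟩
  have hDa : D u.snd = s.incl (N.l u.snd x - N.r u.snd x) := by
    have hc : s.coeff (D u.snd) = 0 := congrArg (· u.snd) hcoeff
    rw [← hx, ← s.incl_proj_add_coeff_smul (D u.snd), hc, zero_smul, add_zero]
    rfl
  conv_lhs => rw [← u.fst_smul_one_add_inr]
  rw [map_add, map_smul, hD.map_one hM, smul_zero, zero_add, hDa, hM.l_unitization,
    hM.r_unitization, (hs _ _).1, (hs _ _).2, s.proj_incl, map_sub]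
  abel

end Derivations

section IteratedDuals

variable (A : Type) [NonUnitalRing A] [Module ℂ A] [SMulCommClass ℂ A A] [IsScalarTower ℂ A A]
  [TopologicalSpace A] [ContinuousSMul ℂ A] [ContinuousMul A]

def canonicalEmbedding (n : ℕ) : A → ((selfBiMod A).iterDual (2 * n)).X :=
  (selfBiMod A).iterEmbed (inferInstanceAs (ContinuousSMul ℂ A)) n

def canonicalPairing (n : ℕ) (a : A) : ((selfBiMod A).iterDual (2 * n + 1)).X →L[ℂ] ℂ :=
  haveI := (selfBiMod A).iterCSM (inferInstanceAs (ContinuousSMul ℂ A)) (2 * n)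
  ((selfBiMod A).iterDual (2 * n)).evalEmbed (canonicalEmbedding A n a)

theorem canonicalPairing_l_r (n : ℕ) (a b : A) (f : ((selfBiMod A).iterDual (2 * n + 1)).X) :
    canonicalPairing A n a (((selfBiMod A).iterDual (2 * n + 1)).l b f) =
        canonicalPairing A n (a * b) f ∧
      canonicalPairing A n a (((selfBiMod A).iterDual (2 * n + 1)).r b f) =
        canonicalPairing A n (b * a) f :=
  ⟨congrArg (show ((selfBiMod A).iterDual (2 * n)).X →L[ℂ] ℂ from f)
      ((selfBiMod A).iterEmbed_r _ b n a),
    congrArg (show ((selfBiMod A).iterDual (2 * n)).X →L[ℂ] ℂ from f)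
      ((selfBiMod A).iterEmbed_l _ b n a)⟩

variable [IsTopologicalAddGroup A]

/-- At odd levels `unit` is the functional `e*` of `A#^(2n+1) = A^(2n+1) ⊕ ℂe*`. -/
def unitizationSplitting : ∀ k : ℕ,
    LineSplitting ((selfBiMod (Unitization ℂ A)).iterDual k).X ((selfBiMod A).iterDual k).X
  | 0 =>
    { proj := Unitization.sndCLM A
      incl := Unitization.inrCLM A
      coeff := Unitization.fstCLM A
      unit := (1 : Unitization ℂ A)
      proj_incl := Unitization.snd_inr ℂ
      proj_unit := Unitization.snd_one (R := ℂ) (A := A)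
      coeff_incl := Unitization.fst_inr ℂ
      coeff_unit := Unitization.fst_one (R := ℂ) (A := A)
      incl_proj_add_coeff_smul := fun (x : Unitization ℂ A) =>
        (add_comm _ _).trans x.fst_smul_one_add_inr }
  | k + 1 =>
    haveI := (selfBiMod (Unitization ℂ A)).iterCSM
      (inferInstanceAs (ContinuousSMul ℂ (Unitization ℂ A))) k
    (unitizationSplitting k).dual

theorem actsViaEmbedding_unitizationSplitting_zero :
    ActsViaEmbedding (unitizationSplitting A 0) (fun a : A => a) := by
  intro a (x : Unitization ℂ A)
  show (a : Unitization ℂ A) * x = ((a * x.snd + x.fst • a : A) : Unitization ℂ A) ∧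
    x * (a : Unitization ℂ A) = ((x.snd * a + x.fst • a : A) : Unitization ℂ A)
  constructor <;> ext <;> simp [add_comm]

theorem actsViaEmbedding_unitizationSplitting :
    ∀ n, ActsViaEmbedding (unitizationSplitting A (2 * n)) (canonicalEmbedding A n)
  | 0 => actsViaEmbedding_unitizationSplitting_zero A
  | n + 1 =>
    haveI := (selfBiMod (Unitization ℂ A)).iterCSM
      (inferInstanceAs (ContinuousSMul ℂ (Unitization ℂ A))) (2 * n)
    haveI := (selfBiMod A).iterCSM (inferInstanceAs (ContinuousSMul ℂ A)) (2 * n)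
    (actsViaEmbedding_unitizationSplitting n).dual.dual

theorem actsViaPairing_unitizationSplitting (n : ℕ) :
    ActsViaPairing (unitizationSplitting A (2 * n + 1)) (canonicalPairing A n) :=
  haveI := (selfBiMod (Unitization ℂ A)).iterCSM
    (inferInstanceAs (ContinuousSMul ℂ (Unitization ℂ A))) (2 * n)
  haveI := (selfBiMod A).iterCSM (inferInstanceAs (ContinuousSMul ℂ A)) (2 * n)
  (actsViaEmbedding_unitizationSplitting A n).dual

end IteratedDuals

theorem unitization_odd_weaklyAmenable_iff_general (A : Type) [NonUnitalRing A] [Module ℂ A] [SMulCommClass ℂ A A]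
    [IsScalarTower ℂ A A] [UniformSpace A] [IsUniformAddGroup A] [ContinuousSMul ℂ A]
    [ContinuousMul A] (hself : SelfInduced A) (n : ℕ) :
    (NWeaklyAmenable (Unitization ℂ A) (2 * n + 1) ↔
      ∀ D : A →L[ℂ] ((selfBiMod A).iterDual (2 * n + 1)).X,
        IsContDerivation A ((selfBiMod A).iterDual (2 * n + 1)) D →
        (∃ T : A →L[ℂ] ℂ, PairCondition A n D T) →
        IsInnerDerivation A ((selfBiMod A).iterDual (2 * n + 1)) D) ∧
    (NWeaklyAmenable (Unitization ℂ A) (2 * n + 1) →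
      ∀ (D : A →L[ℂ] ((selfBiMod A).iterDual (2 * n + 1)).X) (T : A →L[ℂ] ℂ),
        IsContDerivation A ((selfBiMod A).iterDual (2 * n + 1)) D →
        PairCondition A n D T → T = 0) := by
  have hM := (isUnitalLinear_selfBiMod (Unitization ℂ A)).iterDual (2 * n + 1)
  have hs := actsViaPairing_unitizationSplitting A n
  have ht := canonicalPairing_l_r A n
  have : IsTopologicalAddGroup ((selfBiMod (Unitization ℂ A)).iterDual (2 * n + 1)).X :=
    inferInstanceAs (IsTopologicalAddGroup (_ →L[ℂ] ℂ))
  have : ContinuousSMul ℂ ((selfBiMod (Unitization ℂ A)).iterDual (2 * n + 1)).X :=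
    inferInstanceAs (ContinuousSMul ℂ (_ →L[ℂ] ℂ))
  have hforward : NWeaklyAmenable (Unitization ℂ A) (2 * n + 1) →
      ∀ D T, IsContDerivation A _ D → PairCondition A n D T → IsInnerDerivation A _ D :=
    fun hWA D T hD hT =>
      .of_liftDerivation hs (hWA _ (isContDerivation_liftDerivation hM hs hD hT))
  refine ⟨⟨fun hWA D hD ⟨T, hT⟩ => hforward hWA D T hD hT, fun hcond D hD => ?_⟩,
    fun hWA D T hD hT => eq_zero_of_isInnerDerivation hself.1 ht hT (hforward hWA D T hD hT)⟩
  have hT := coeff_comp_apply_mul hs hD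
  have hinner := hcond _ (isContDerivation_proj_comp hs hD) ⟨_, hT⟩
  exact .of_proj_comp hM hs hD hinner (eq_zero_of_isInnerDerivation hself.1 ht hT hinner)

/-- For a non-unital self-induced Fréchet algebra `A`, the unitization `A#` is
`(2n+1)`-weakly amenable iff every continuous derivation `D : A → A^(2n+1)` admitting
some `T ∈ A*` with `⟨ab, T⟩ = ⟨a, D b⟩ + ⟨b, D a⟩` is inner; and in that case every
such `T` must vanish. -/
theorem unitization_odd_weaklyAmenable_iff (A : Type) [NonUnitalRing A] [Module ℂ A] [SMulCommClass ℂ A A]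
    [IsScalarTower ℂ A A] [UniformSpace A] [IsUniformAddGroup A] [ContinuousSMul ℂ A]
    [ContinuousMul A] [CompleteSpace A] [T2Space A] (hA : FrechetSeminorms A)
    (hnu : ¬ HasIdentity A) (hself : SelfInduced A) (n : ℕ) :
    (NWeaklyAmenable (Unitization ℂ A) (2 * n + 1) ↔
      ∀ D : A →L[ℂ] ((selfBiMod A).iterDual (2 * n + 1)).X,
        IsContDerivation A ((selfBiMod A).iterDual (2 * n + 1)) D →
        (∃ T : A →L[ℂ] ℂ, PairCondition A n D T) →
        IsInnerDerivation A ((selfBiMod A).iterDual (2 * n + 1)) D) ∧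
    (NWeaklyAmenable (Unitization ℂ A) (2 * n + 1) →
      ∀ (D : A →L[ℂ] ((selfBiMod A).iterDual (2 * n + 1)).X) (T : A →L[ℂ] ℂ),
        IsContDerivation A ((selfBiMod A).iterDual (2 * n + 1)) D →
        PairCondition A n D T → T = 0) :=
  unitization_odd_weaklyAmenable_iff_general A hself n
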